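/- arXiv:2508.02078 — 4 statements merged into one kernel-verified Lean document; each statement's English description precedes it below -/
import Mathlib

section
/- An Arnoldi aggregation of size j is (j−1)-exact: the approximated transient distributions satisfy p̃_k = p_k for all 0 ≤ k ≤ j−1, where p_k^T = p_0^T P^k are the true transient distributions. -/
/-!
The Arnoldi relation says that for every row `i` with `i + 1 < j` the vector `q_i P` is the
combination `∑ₗ H_{il} q_l` of the Arnoldi vectors, i.e. row `i` of `H_j Q_j` equals row `i` of
`Q_j P`; only the last row carries the error term `h_{j,j+1} q_{j+1}`. Since `H_j` is upper
Hessenberg, `π₀ᵀ H_j^k` is supported on its first `k + 1` entries, so for `k < j - 1` it never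
weights the last row and `π₀ᵀ H_j^{k+1} Q_j = (π₀ᵀ H_j^k Q_j) P`. Induction from
`π₀ᵀ Q_j = ‖p₀‖₂ q_0 = p₀ᵀ` gives `π₀ᵀ H_j^k Q_j = p₀ᵀ P^k` for all `k ≤ j - 1`.
-/

open Matrix Finset

/-- Euclidean norm of a row vector. -/
noncomputable def norm2 {n : ℕ} (v : Fin n → ℝ) : ℝ := Real.sqrt (v ⬝ᵥ v)

/-- One Gram–Schmidt projection-subtraction step. -/
noncomputable def gsStep {n : ℕ} (r q : Fin n → ℝ) : Fin n → ℝ := r - (r ⬝ᵥ q) • q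

/-- List `[q_0, …, q_j]` of Arnoldi vectors after `j` expansion steps applied to `(v, M)`. -/
noncomputable def arnoldiList {n : ℕ} (v : Fin n → ℝ) (M : Matrix (Fin n) (Fin n) ℝ) :
    ℕ → List (Fin n → ℝ)
  | 0 => [(norm2 v)⁻¹ • v]
  | j + 1 =>
    let qs := arnoldiList v M j
    let r := qs.foldl gsStep (Matrix.vecMul (qs.getLastD 0) M)
    qs ++ [(norm2 r)⁻¹ • r]

/-- The Arnoldi vector `q_{i+1}` of the paper (0-indexed: `aQ v M i`). -/
noncomputable def aQ {n : ℕ} (v : Fin n → ℝ) (M : Matrix (Fin n) (Fin n) ℝ) (i : ℕ) :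
    Fin n → ℝ :=
  (arnoldiList v M i).getLastD 0

/-- Partial residual `r^{(i)}` in outer step `j` (0-indexed): `q_j M` minus the projections
onto `q_0, …, q_{i-1}`. -/
noncomputable def pres {n : ℕ} (v : Fin n → ℝ) (M : Matrix (Fin n) (Fin n) ℝ) (j i : ℕ) :
    Fin n → ℝ :=
  ((arnoldiList v M j).take i).foldl gsStep (Matrix.vecMul (aQ v M j) M)

/-- The Gram–Schmidt coefficient `h_{j,i}` (0-indexed in both arguments). -/
noncomputable def aH {n : ℕ} (v : Fin n → ℝ) (M : Matrix (Fin n) (Fin n) ℝ) (j i : ℕ) : ℝ :=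
  pres v M j i ⬝ᵥ aQ v M i

/-- The subdiagonal coefficient `h_{j, j+1} = ‖r_{j+1}‖₂` (0-indexed in `j`). -/
noncomputable def hsub {n : ℕ} (v : Fin n → ℝ) (M : Matrix (Fin n) (Fin n) ℝ) (j : ℕ) : ℝ :=
  norm2 (pres v M j (j + 1))

/-- The upper-Hessenberg matrix `H_j` produced by `j` Arnoldi steps. -/
noncomputable def arnoldiHmat {n : ℕ} (v : Fin n → ℝ) (M : Matrix (Fin n) (Fin n) ℝ) (j : ℕ) :
    Matrix (Fin j) (Fin j) ℝ := fun i l =>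
  if (l : ℕ) ≤ (i : ℕ) then aH v M i l
  else if (l : ℕ) = (i : ℕ) + 1 then hsub v M i else 0

/-- The matrix `Q_j` whose rows are the Arnoldi vectors `q_1, …, q_j` of the paper. -/
noncomputable def arnoldiQmat {n : ℕ} (v : Fin n → ℝ) (M : Matrix (Fin n) (Fin n) ℝ) (j : ℕ) :
    Matrix (Fin j) (Fin n) ℝ := fun i => aQ v M i

/-- The Krylov subspace `K^j(v, M) = span{v, vM, …, vM^{j-1}}` (of row vectors). -/
noncomputable def krylov {n : ℕ} (v : Fin n → ℝ) (M : Matrix (Fin n) (Fin n) ℝ) (j : ℕ) :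
    Submodule ℝ (Fin n → ℝ) :=
  Submodule.span ℝ (Set.range fun i : Fin j => Matrix.vecMul v (M ^ (i : ℕ)))


section Hessenberg

variable {R ι : Type*} [Semiring R] {m : ℕ}

def Matrix.IsUpperHessenberg (H : Matrix (Fin m) (Fin m) R) : Prop :=
  ∀ i l : Fin m, (i : ℕ) + 1 < l → H i l = 0

theorem vecMul_support_succ_of_isUpperHessenberg {H : Matrix (Fin m) (Fin m) R}
    (hH : H.IsUpperHessenberg) {w : Fin m → R} {k : ℕ}
    (hw : ∀ l : Fin m, k < (l : ℕ) → w l = 0) :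
    ∀ l : Fin m, k + 1 < (l : ℕ) → (w ᵥ* H) l = 0 := by
  intro l hl
  show ∑ i, w i * H i l = 0
  refine sum_eq_zero fun i _ => ?_
  rcases le_or_gt (i : ℕ) k with hik | hik
  · rw [hH i l (by omega), mul_zero]
  · rw [hw i hik, zero_mul]

theorem vecMul_pow_support_of_isUpperHessenberg {H : Matrix (Fin m) (Fin m) R}
    (hH : H.IsUpperHessenberg) {w : Fin m → R} {a : ℕ}
    (hw : ∀ l : Fin m, a < (l : ℕ) → w l = 0) (k : ℕ) :
    ∀ l : Fin m, a + k < (l : ℕ) → (w ᵥ* H ^ k) l = 0 := by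
  induction k with
  | zero => simpa using hw
  | succ k ih =>
    rw [pow_succ, ← vecMul_vecMul]
    exact vecMul_support_succ_of_isUpperHessenberg hH ih

theorem vecMul_vecMul_eq_of_row_eq {κ : Type*} [Fintype κ] [Fintype ι]
    {H : Matrix κ κ R} {Q : Matrix κ ι R} {M : Matrix ι ι R} {w : κ → R}
    (h : ∀ i, w i ≠ 0 → H i ᵥ* Q = Q i ᵥ* M) :
    w ᵥ* H ᵥ* Q = w ᵥ* Q ᵥ* M := by
  rw [vecMul_vecMul, vecMul_vecMul, vecMul_eq_sum, vecMul_eq_sum]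
  refine sum_congr rfl fun i _ => ?_
  rw [mul_apply_eq_vecMul, mul_apply_eq_vecMul]
  by_cases hwi : w i = 0
  · simp [hwi]
  · rw [h i hwi]

theorem vecMul_pow_vecMul_eq_of_isUpperHessenberg [Fintype ι] [DecidableEq ι]
    {H : Matrix (Fin m) (Fin m) R} {Q : Matrix (Fin m) ι R} {M : Matrix ι ι R}
    (hH : H.IsUpperHessenberg)
    (hrow : ∀ i : Fin m, (i : ℕ) + 1 < m → H i ᵥ* Q = Q i ᵥ* M)
    {w : Fin m → R} (hw : ∀ l : Fin m, 0 < (l : ℕ) → w l = 0) {k : ℕ} (hk : k < m) :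
    w ᵥ* H ^ k ᵥ* Q = w ᵥ* Q ᵥ* M ^ k := by
  induction k with
  | zero => simp
  | succ k ih =>
    have hrow' : ∀ i, (w ᵥ* H ^ k) i ≠ 0 → H i ᵥ* Q = Q i ᵥ* M := by
      intro i hi
      refine hrow i ?_
      by_contra hlast
      exact hi (vecMul_pow_support_of_isUpperHessenberg hH hw k i (by omega))
    rw [pow_succ, ← vecMul_vecMul, vecMul_vecMul_eq_of_row_eq hrow', ih (by omega),
      vecMul_vecMul, ← pow_succ]

end Hessenberg

section Arnoldi

variable {n : ℕ} (v : Fin n → ℝ) (M : Matrix (Fin n) (Fin n) ℝ)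

theorem norm2_smul_inv_norm2_smul (r : Fin n → ℝ) : norm2 r • (norm2 r)⁻¹ • r = r := by
  rcases eq_or_ne (norm2 r) 0 with h | h
  · have hr : r = 0 :=
      dotProduct_self_eq_zero.mp ((Real.sqrt_eq_zero (dotProduct_self_star_nonneg r)).mp h)
    simp [hr]
  · rw [smul_smul, mul_inv_cancel₀ h, one_smul]

theorem norm2_smul_aQ_zero : norm2 v • aQ v M 0 = v :=
  norm2_smul_inv_norm2_smul v

theorem arnoldiList_length (j : ℕ) : (arnoldiList v M j).length = j + 1 := by
  induction j with
  | zero => rfl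
  | succ j ih => simp [arnoldiList, ih]

theorem arnoldiList_succ (j : ℕ) :
    arnoldiList v M (j + 1) =
      arnoldiList v M j ++ [(norm2 (pres v M j (j + 1)))⁻¹ • pres v M j (j + 1)] := by
  rw [pres, List.take_of_length_le (arnoldiList_length v M j).le]
  rfl

theorem aQ_succ (j : ℕ) :
    aQ v M (j + 1) = (norm2 (pres v M j (j + 1)))⁻¹ • pres v M j (j + 1) := by
  rw [aQ, arnoldiList_succ, List.getLastD_concat]

theorem arnoldiList_getElem? {j i : ℕ} (h : i ≤ j) :
    (arnoldiList v M j)[i]? = some (aQ v M i) := by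
  induction j with
  | zero =>
    obtain rfl : i = 0 := by omega
    rfl
  | succ j ih =>
    rw [arnoldiList_succ]
    rcases Nat.lt_or_ge i (j + 1) with hi | hi
    · rw [List.getElem?_append_left (by rw [arnoldiList_length]; omega)]
      exact ih (by omega)
    · obtain rfl : i = j + 1 := by omega
      rw [List.getElem?_append_right (by rw [arnoldiList_length]), arnoldiList_length]
      simp [aQ_succ]

theorem pres_succ {j i : ℕ} (h : i ≤ j) :
    pres v M j (i + 1) = pres v M j i - aH v M j i • aQ v M i := by
  rw [pres, List.take_add_one, arnoldiList_getElem? v M h, List.foldl_append]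
  rfl

theorem pres_succ_self (j : ℕ) : pres v M j (j + 1) = hsub v M j • aQ v M (j + 1) := by
  rw [aQ_succ, hsub, norm2_smul_inv_norm2_smul]

theorem pres_eq_sub_sum {j i : ℕ} (h : i ≤ j + 1) :
    pres v M j i = aQ v M j ᵥ* M - ∑ l ∈ range i, aH v M j l • aQ v M l := by
  induction i with
  | zero => simp [pres]
  | succ i ih => rw [pres_succ v M (by omega), ih (by omega), sum_range_succ, sub_sub]

/-- This holds also at a breakdown `hsub v M i = 0`, where `pres v M i (i + 1) = 0`. -/
theorem aQ_vecMul (i : ℕ) :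
    aQ v M i ᵥ* M =
      ∑ l ∈ range (i + 1), aH v M i l • aQ v M l + hsub v M i • aQ v M (i + 1) := by
  rw [← pres_succ_self, pres_eq_sub_sum v M le_rfl, add_sub_cancel]

theorem arnoldiHmat_isUpperHessenberg (j : ℕ) : (arnoldiHmat v M j).IsUpperHessenberg := by
  intro i l hil
  simp only [arnoldiHmat]
  rw [if_neg (by omega), if_neg (by omega)]

theorem arnoldiHmat_row_vecMul {j : ℕ} {i : Fin j} (hi : (i : ℕ) + 1 < j) :
    arnoldiHmat v M j i ᵥ* arnoldiQmat v M j = arnoldiQmat v M j i ᵥ* M := by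
  set c : ℕ → ℝ := fun l =>
    if l ≤ (i : ℕ) then aH v M i l else if l = (i : ℕ) + 1 then hsub v M i else 0
  have hsum : arnoldiHmat v M j i ᵥ* arnoldiQmat v M j = ∑ l ∈ range j, c l • aQ v M l := by
    rw [vecMul_eq_sum, ← Fin.sum_univ_eq_sum_range (fun l => c l • aQ v M l)]
    rfl
  have htail : ∑ l ∈ Ico ((i : ℕ) + 1 + 1) j, c l • aQ v M l = 0 :=
    sum_eq_zero fun l hl => by
      rw [mem_Ico] at hl
      simp only [c]
      rw [if_neg (by omega), if_neg (by omega), zero_smul]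
  have hhead :
      ∑ l ∈ range (i + 1), c l • aQ v M l = ∑ l ∈ range (i + 1), aH v M i l • aQ v M l :=
    sum_congr rfl fun l hl => by
      rw [mem_range] at hl
      simp only [c]
      rw [if_pos (by omega)]
  have hlast : c ((i : ℕ) + 1) = hsub v M i := by simp [c]
  rw [hsum, ← sum_range_add_sum_Ico _ hi, htail, add_zero, sum_range_succ, hhead, hlast]
  exact (aQ_vecMul v M i).symm

end Arnoldi

theorem arnoldi_initially_exact_general {n j : ℕ} (hj : 0 < j)
    (P : Matrix (Fin n) (Fin n) ℝ)
    (p₀ : Fin n → ℝ) :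
    ∀ k : ℕ, k ≤ j - 1 →
      Matrix.vecMul
        (Matrix.vecMul (fun s : Fin j => if (s : ℕ) = 0 then norm2 p₀ else 0)
          ((arnoldiHmat p₀ P j) ^ k))
        (arnoldiQmat p₀ P j) =
      Matrix.vecMul p₀ (P ^ k) := by
  intro k hk
  have hπ₀ : (fun s : Fin j => if (s : ℕ) = 0 then norm2 p₀ else 0) =
      Pi.single ⟨0, hj⟩ (norm2 p₀) := by
    ext s
    simp [Pi.single_apply, Fin.ext_iff]
  rw [vecMul_pow_vecMul_eq_of_isUpperHessenberg (arnoldiHmat_isUpperHessenberg p₀ P j)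
      (fun i hi => arnoldiHmat_row_vecMul p₀ P hi) (fun l hl => if_neg (by omega)) (by omega),
    hπ₀, single_vecMul]
  exact congrArg (· ᵥ* P ^ k) (norm2_smul_aQ_zero p₀ P)

/-- an Arnoldi aggregation of size `j` is `(j-1)`-exact:
`p̃_k = p_k` for `0 ≤ k ≤ j-1`. -/
theorem arnoldi_initially_exact {n j : ℕ} (hj : 0 < j)
    (P : Matrix (Fin n) (Fin n) ℝ)
    (hPnn : ∀ i l, 0 ≤ P i l) (hProw : ∀ i, ∑ l, P i l = 1)
    (p₀ : Fin n → ℝ) (hp₀nn : ∀ s, 0 ≤ p₀ s) (hp₀sum : ∑ s, p₀ s = 1)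
    (hrun : ∀ i, i + 1 < j → hsub p₀ P i ≠ 0) :
    ∀ k : ℕ, k ≤ j - 1 →
      Matrix.vecMul
        (Matrix.vecMul (fun s : Fin j => if (s : ℕ) = 0 then norm2 p₀ else 0)
          ((arnoldiHmat p₀ P j) ^ k))
        (arnoldiQmat p₀ P j) =
      Matrix.vecMul p₀ (P ^ k) :=
  arnoldi_initially_exact_general hj P p₀
end

section
/- If the Krylov subspace K^j(p_0, P) is invariant under P, then the Arnoldi aggregation of size j is exact: it is dynamic-exact (Π A = A P) and satisfies p̃_0 = p_0, and consequently p̃_k = p_k for all k ≥ 0. -/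
open Matrix Finset

/-!
Gram–Schmidt makes `q₀, …, q_{j-1}` orthonormal, and as long as no breakdown occurs they span
`K^j(p₀, P)`. Invariance puts the last residual `r_j = q_{j-1} P - ∑ h_{j-1,l} q_l` back into
`K^j(p₀, P)`, while by construction it is orthogonal to every `q_l`; hence `r_j = 0`. That is
precisely the missing last row of the Arnoldi relation, so `H_j Q_j = Q_j P`, and then
`π₀ᵀ H_j^k Q_j = π₀ᵀ Q_j P^k = p₀ᵀ P^k`.
-/

section DynamicExact

variable {R ι κ : Type*} [Semiring R] [Fintype ι] [Fintype κ] [DecidableEq ι] [DecidableEq κ]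
  {H : Matrix ι ι R} {A : Matrix ι κ R} {P : Matrix κ κ R}

theorem pow_mul_eq_mul_pow_of_mul_eq (h : H * A = A * P) (k : ℕ) : H ^ k * A = A * P ^ k := by
  induction k with
  | zero => simp
  | succ k ih =>
    rw [pow_succ, Matrix.mul_assoc, h, ← Matrix.mul_assoc, ih, Matrix.mul_assoc, ← pow_succ]

theorem vecMul_pow_vecMul_of_mul_eq (h : H * A = A * P) (π : ι → R) (k : ℕ) :
    π ᵥ* (H ^ k) ᵥ* A = (π ᵥ* A) ᵥ* (P ^ k) := by
  rw [vecMul_vecMul, pow_mul_eq_mul_pow_of_mul_eq h, vecMul_vecMul]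

end DynamicExact

theorem dotProduct_eq_zero_of_mem_span {R ι : Type*} [CommSemiring R] [Fintype ι]
    {S : Set (ι → R)} {x y : ι → R} (hx : ∀ s ∈ S, x ⬝ᵥ s = 0)
    (hy : y ∈ Submodule.span R S) : x ⬝ᵥ y = 0 := by
  induction hy using Submodule.span_induction with
  | mem s hs => exact hx s hs
  | zero => exact dotProduct_zero x
  | add y z _ _ hy hz => rw [dotProduct_add, hy, hz, add_zero]
  | smul a y _ hy => rw [dotProduct_smul, hy, smul_zero]

section Norm2

variable {n : ℕ} {r : Fin n → ℝ}

theorem dotProduct_self_nonneg : 0 ≤ r ⬝ᵥ r :=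
  Finset.sum_nonneg fun _ _ => mul_self_nonneg _

theorem norm2_mul_self : norm2 r * norm2 r = r ⬝ᵥ r :=
  Real.mul_self_sqrt dotProduct_self_nonneg

theorem norm2_eq_zero_iff : norm2 r = 0 ↔ r = 0 :=
  (Real.sqrt_eq_zero dotProduct_self_nonneg).trans dotProduct_self_eq_zero

theorem dotProduct_inv_norm2_smul_self (h : norm2 r ≠ 0) :
    ((norm2 r)⁻¹ • r) ⬝ᵥ ((norm2 r)⁻¹ • r) = 1 := by
  rw [smul_dotProduct, dotProduct_smul, smul_eq_mul, smul_eq_mul, ← norm2_mul_self]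
  field_simp

end Norm2

namespace Arnoldi

variable {n : ℕ} (v : Fin n → ℝ) (M : Matrix (Fin n) (Fin n) ℝ)

theorem arnoldiList_eq_map_range (j : ℕ) :
    arnoldiList v M j = (List.range (j + 1)).map (aQ v M) := by
  induction j with
  | zero => rfl
  | succ j ih =>
    have hsucc : arnoldiList v M (j + 1) = arnoldiList v M j ++ [aQ v M (j + 1)] := by
      conv_lhs => rw [arnoldiList]
      rw [aQ, arnoldiList]
      simp
    rw [hsucc, ih, List.range_succ (n := j + 1), List.map_append, List.map_singleton]

theorem norm2_smul_aQ_zero (hv : v ≠ 0) : norm2 v • aQ v M 0 = v :=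
  smul_inv_smul₀ (mt norm2_eq_zero_iff.mp hv) v

theorem aQ_succ (j : ℕ) :
    aQ v M (j + 1) = (norm2 (pres v M j (j + 1)))⁻¹ • pres v M j (j + 1) := by
  have hlen : (arnoldiList v M j).length = j + 1 := by simp [arnoldiList_eq_map_range]
  rw [aQ, arnoldiList, List.getLastD_concat, pres, List.take_of_length_le hlen.le]
  rfl

theorem pres_eq_foldl {j i : ℕ} (hij : i ≤ j + 1) :
    pres v M j i = ((List.range i).map (aQ v M)).foldl gsStep (aQ v M j ᵥ* M) := by
  rw [pres, arnoldiList_eq_map_range, ← List.map_take, List.take_range, min_eq_left hij]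

theorem pres_succ {j i : ℕ} (h : i ≤ j) :
    pres v M j (i + 1) = pres v M j i - aH v M j i • aQ v M i := by
  rw [pres_eq_foldl v M (by omega), List.range_succ, List.map_append, List.foldl_append,
    ← pres_eq_foldl v M (by omega)]
  simp [gsStep, aH]

theorem pres_eq_vecMul_sub_sum {j k : ℕ} (h : k ≤ j + 1) :
    pres v M j k = aQ v M j ᵥ* M - ∑ l ∈ Finset.range k, aH v M j l • aQ v M l := by
  induction k with
  | zero => simp [pres_eq_foldl v M h]
  | succ k ih =>
    rw [pres_succ v M (by omega), ih (by omega), Finset.sum_range_succ]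
    abel

theorem vecMul_aQ_eq {j : ℕ} (h : hsub v M j ≠ 0) :
    aQ v M j ᵥ* M = ∑ l ∈ Finset.range (j + 1), aH v M j l • aQ v M l
      + hsub v M j • aQ v M (j + 1) := by
  rw [aQ_succ, smul_smul, ← hsub, mul_inv_cancel₀ h, one_smul,
    pres_eq_vecMul_sub_sum v M le_rfl]
  abel

theorem pres_dotProduct_aQ {m : ℕ}
    (hON : ∀ i ≤ m, ∀ l ≤ m, aQ v M i ⬝ᵥ aQ v M l = if i = l then 1 else 0) :
    ∀ k ≤ m + 1, ∀ l < k, pres v M m k ⬝ᵥ aQ v M l = 0 := by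
  intro k
  induction k with
  | zero => intro _ l hl; omega
  | succ k ih =>
    intro hk l hl
    rw [pres_succ v M (by omega), sub_dotProduct, smul_dotProduct, smul_eq_mul]
    rcases (Nat.lt_succ_iff.mp hl).eq_or_lt with rfl | hlk
    · rw [hON l (by omega) l (by omega), if_pos rfl, aH, mul_one, sub_self]
    · rw [ih (by omega) l hlk, hON k (by omega) l (by omega), if_neg (by omega), mul_zero,
        sub_zero]

theorem aQ_dotProduct_aQ (hv : v ≠ 0) {m : ℕ} (hrun : ∀ i < m, hsub v M i ≠ 0) :
    ∀ i ≤ m, ∀ l ≤ m, aQ v M i ⬝ᵥ aQ v M l = if i = l then 1 else 0 := by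
  induction m with
  | zero =>
    intro i hi l hl
    obtain rfl : i = 0 := by omega
    obtain rfl : l = 0 := by omega
    exact dotProduct_inv_norm2_smul_self (mt norm2_eq_zero_iff.mp hv)
  | succ m ih =>
    have hON := ih fun i hi => hrun i (by omega)
    have hnew : ∀ l ≤ m, aQ v M (m + 1) ⬝ᵥ aQ v M l = 0 := fun l hl => by
      rw [aQ_succ, smul_dotProduct, pres_dotProduct_aQ v M hON (m + 1) le_rfl l (by omega),
        smul_zero]
    intro i hi l hl
    rcases Nat.of_le_succ hi with hi | rfl <;> rcases Nat.of_le_succ hl with hl | rfl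
    · exact hON i hi l hl
    · rw [dotProduct_comm, hnew i (by omega), if_neg (by omega)]
    · rw [hnew l (by omega), if_neg (by omega)]
    · rw [if_pos rfl, aQ_succ]
      exact dotProduct_inv_norm2_smul_self (hrun m (by omega))

theorem vecMul_mem_span_aQ {i : ℕ} (hrun : ∀ t ≤ i, hsub v M t ≠ 0) {x : Fin n → ℝ}
    (hx : x ∈ Submodule.span ℝ (aQ v M '' Set.Iic i)) :
    x ᵥ* M ∈ Submodule.span ℝ (aQ v M '' Set.Iic (i + 1)) := by
  have hmap : (Submodule.span ℝ (aQ v M '' Set.Iic i)).map (vecMulLinear M) ≤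
      Submodule.span ℝ (aQ v M '' Set.Iic (i + 1)) := by
    rw [Submodule.map_span, Submodule.span_le]
    rintro _ ⟨_, ⟨t, ht, rfl⟩, rfl⟩
    have hq (l : ℕ) (hl : l ≤ i + 1) :
        aQ v M l ∈ Submodule.span ℝ (aQ v M '' Set.Iic (i + 1)) :=
      Submodule.subset_span ⟨l, hl, rfl⟩
    rw [vecMulLinear_apply, vecMul_aQ_eq v M (hrun t ht)]
    refine add_mem (Submodule.sum_mem _ fun l hl => ?_) (Submodule.smul_mem _ _ (hq _ (by grind)))
    exact Submodule.smul_mem _ _ (hq l (by grind))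
  exact hmap (Submodule.mem_map_of_mem hx)

theorem vecMul_pow_mem_span_aQ (hv : v ≠ 0) {i : ℕ} (hrun : ∀ t < i, hsub v M t ≠ 0) :
    v ᵥ* (M ^ i) ∈ Submodule.span ℝ (aQ v M '' Set.Iic i) := by
  induction i with
  | zero =>
    have hq₀ : aQ v M 0 ∈ Submodule.span ℝ (aQ v M '' Set.Iic 0) :=
      Submodule.subset_span ⟨0, Set.mem_Iic.mpr le_rfl, rfl⟩
    rw [pow_zero, vecMul_one]
    simpa only [norm2_smul_aQ_zero v M hv] using Submodule.smul_mem _ (norm2 v) hq₀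
  | succ i ih =>
    rw [pow_succ, ← vecMul_vecMul]
    exact vecMul_mem_span_aQ v M (fun t ht => hrun t (by omega))
      (ih fun t ht => hrun t (by omega))

theorem krylov_le_span_aQ (hv : v ≠ 0) {m : ℕ} (hrun : ∀ i < m, hsub v M i ≠ 0) :
    krylov v M (m + 1) ≤ Submodule.span ℝ (aQ v M '' Set.Iic m) := by
  rw [krylov, Submodule.span_le]
  rintro _ ⟨i, rfl⟩
  refine Submodule.span_mono (Set.image_mono (Set.Iic_subset_Iic.mpr ?_))
    (vecMul_pow_mem_span_aQ v M hv fun t ht => hrun t (by omega))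
  omega

theorem pres_mem_of_invariant (K : Submodule ℝ (Fin n → ℝ)) (hK : ∀ w ∈ K, w ᵥ* M ∈ K)
    {t : ℕ} (hq : ∀ l ≤ t, aQ v M l ∈ K) : pres v M t (t + 1) ∈ K := by
  rw [pres_eq_vecMul_sub_sum v M le_rfl]
  refine sub_mem (hK _ (hq t le_rfl)) (Submodule.sum_mem _ fun l hl => ?_)
  exact Submodule.smul_mem _ _ (hq l (Nat.lt_succ_iff.mp (Finset.mem_range.mp hl)))

theorem aQ_mem_krylov {j : ℕ} (hinv : ∀ w ∈ krylov v M j, w ᵥ* M ∈ krylov v M j) :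
    ∀ t < j, aQ v M t ∈ krylov v M j := by
  intro t
  induction t using Nat.strong_induction_on with
  | _ t ih =>
    intro htj
    cases t with
    | zero =>
      refine Submodule.smul_mem _ _ (Submodule.subset_span ⟨⟨0, htj⟩, ?_⟩)
      simp
    | succ t =>
      rw [aQ_succ]
      exact Submodule.smul_mem _ _ (pres_mem_of_invariant v M _ hinv fun l hl =>
        ih l (by omega) (by omega))

theorem pres_last_eq_zero_of_invariant (hv : v ≠ 0) {m : ℕ} (hrun : ∀ i < m, hsub v M i ≠ 0)
    (hinv : ∀ w ∈ krylov v M (m + 1), w ᵥ* M ∈ krylov v M (m + 1)) :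
    pres v M m (m + 1) = 0 := by
  have hmem : pres v M m (m + 1) ∈ Submodule.span ℝ (aQ v M '' Set.Iic m) :=
    krylov_le_span_aQ v M hv hrun <| pres_mem_of_invariant v M _ hinv fun l hl =>
      aQ_mem_krylov v M hinv l (by omega)
  have horth : ∀ s ∈ aQ v M '' Set.Iic m, pres v M m (m + 1) ⬝ᵥ s = 0 := by
    rintro _ ⟨l, hl, rfl⟩
    exact pres_dotProduct_aQ v M (aQ_dotProduct_aQ v M hv hrun) (m + 1) le_rfl l
      (Nat.lt_succ_of_le hl)
  exact dotProduct_self_eq_zero.mp (dotProduct_eq_zero_of_mem_span horth hmem)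

theorem sum_arnoldiHmat_smul_aQ {m : ℕ} (hrun : ∀ i < m, hsub v M i ≠ 0)
    (hlast : pres v M m (m + 1) = 0) (i : Fin (m + 1)) :
    ∑ l, arnoldiHmat v M (m + 1) i l • aQ v M l = aQ v M i ᵥ* M := by
  set c : ℕ → ℝ := fun l =>
    if l ≤ (i : ℕ) then aH v M i l else if l = (i : ℕ) + 1 then hsub v M i else 0
  have hc : ∀ l ∈ Finset.range (i + 1), c l • aQ v M l = aH v M i l • aQ v M l :=
    fun l hl => by simp only [c, if_pos (Nat.lt_succ_iff.mp (Finset.mem_range.mp hl))]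
  have hsum : ∑ l, arnoldiHmat v M (m + 1) i l • aQ v M l =
      ∑ l ∈ Finset.range (m + 1), c l • aQ v M l :=
    Fin.sum_univ_eq_sum_range (fun l => c l • aQ v M l) _
  rcases (Nat.lt_succ_iff.mp i.isLt).lt_or_eq with hi | hi
  · have hzero :
        ∀ l ∈ Finset.range (m + 1), l ∉ Finset.range (i + 2) → c l • aQ v M l = 0 :=
      fun l _ hl => by
        simp only [c, Finset.mem_range] at hl ⊢
        rw [if_neg (by omega), if_neg (by omega), zero_smul]
    have hsucc : c (i + 1) = hsub v M i := by simp [c]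
    rw [hsum, ← Finset.sum_subset (Finset.range_subset_range.mpr (by omega)) hzero,
      Finset.sum_range_succ, Finset.sum_congr rfl hc, hsucc, vecMul_aQ_eq v M (hrun i hi)]
  · have hrange : Finset.range (m + 1) = Finset.range (i + 1) := by rw [hi]
    rw [hsum, Finset.sum_congr hrange hc, eq_comm, ← sub_eq_zero,
      ← pres_eq_vecMul_sub_sum v M le_rfl, hi]
    exact hlast

theorem arnoldiHmat_mul_arnoldiQmat {m : ℕ} (hrun : ∀ i < m, hsub v M i ≠ 0)
    (hlast : pres v M m (m + 1) = 0) :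
    arnoldiHmat v M (m + 1) * arnoldiQmat v M (m + 1) = arnoldiQmat v M (m + 1) * M := by
  funext i
  rw [mul_apply_eq_vecMul, mul_apply_eq_vecMul, vecMul_eq_sum]
  exact sum_arnoldiHmat_smul_aQ v M hrun hlast i

theorem vecMul_arnoldiQmat_eq_self (hv : v ≠ 0) {j : ℕ} (hj : 0 < j) :
    (fun s : Fin j => if (s : ℕ) = 0 then norm2 v else 0) ᵥ* arnoldiQmat v M j = v := by
  have hzero (s : Fin j) (hs : s ≠ ⟨0, hj⟩) :
      (if (s : ℕ) = 0 then norm2 v else 0) • arnoldiQmat v M j s = 0 := by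
    rw [if_neg (fun h => hs (Fin.ext h)), zero_smul]
  rw [vecMul_eq_sum, Finset.sum_eq_single ⟨0, hj⟩ (fun s _ => hzero s) (by simp), if_pos rfl]
  exact norm2_smul_aQ_zero v M hv

end Arnoldi

theorem arnoldi_exact_of_invariant_general {n j : ℕ} (hj : 0 < j)
    (P : Matrix (Fin n) (Fin n) ℝ)
    (p₀ : Fin n → ℝ) (hp₀sum : ∑ s, p₀ s = 1)
    (hrun : ∀ i, i + 1 < j → hsub p₀ P i ≠ 0)
    (hinv : ∀ w ∈ krylov p₀ P j, Matrix.vecMul w P ∈ krylov p₀ P j) :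
    arnoldiHmat p₀ P j * arnoldiQmat p₀ P j = arnoldiQmat p₀ P j * P ∧
    Matrix.vecMul (fun s : Fin j => if (s : ℕ) = 0 then norm2 p₀ else 0)
      (arnoldiQmat p₀ P j) = p₀ ∧
    ∀ k : ℕ,
      Matrix.vecMul
        (Matrix.vecMul (fun s : Fin j => if (s : ℕ) = 0 then norm2 p₀ else 0)
          ((arnoldiHmat p₀ P j) ^ k))
        (arnoldiQmat p₀ P j) =
      Matrix.vecMul p₀ (P ^ k) := by
  obtain ⟨m, rfl⟩ : ∃ m, j = m + 1 := ⟨j - 1, by omega⟩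
  have hp₀ : p₀ ≠ 0 := by
    rintro rfl
    simp at hp₀sum
  have hrun' : ∀ i < m, hsub p₀ P i ≠ 0 := fun i hi => hrun i (by omega)
  have hdyn := Arnoldi.arnoldiHmat_mul_arnoldiQmat p₀ P hrun'
    (Arnoldi.pres_last_eq_zero_of_invariant p₀ P hp₀ hrun' hinv)
  have hinit := Arnoldi.vecMul_arnoldiQmat_eq_self p₀ P hp₀ hj
  refine ⟨hdyn, hinit, fun k => ?_⟩
  rw [vecMul_pow_vecMul_of_mul_eq hdyn, hinit]

/-- if `K^j(p₀,P)` is invariant under `P`, the Arnoldi aggregation of size `j`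
is exact: it is dynamic-exact, `p̃_0 = p_0`, and consequently `p̃_k = p_k` for all `k`. -/
theorem arnoldi_exact_of_invariant {n j : ℕ} (hj : 0 < j)
    (P : Matrix (Fin n) (Fin n) ℝ)
    (hPnn : ∀ i l, 0 ≤ P i l) (hProw : ∀ i, ∑ l, P i l = 1)
    (p₀ : Fin n → ℝ) (hp₀nn : ∀ s, 0 ≤ p₀ s) (hp₀sum : ∑ s, p₀ s = 1)
    (hrun : ∀ i, i + 1 < j → hsub p₀ P i ≠ 0)
    (hinv : ∀ w ∈ krylov p₀ P j, Matrix.vecMul w P ∈ krylov p₀ P j) :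
    arnoldiHmat p₀ P j * arnoldiQmat p₀ P j = arnoldiQmat p₀ P j * P ∧
    Matrix.vecMul (fun s : Fin j => if (s : ℕ) = 0 then norm2 p₀ else 0)
      (arnoldiQmat p₀ P j) = p₀ ∧
    ∀ k : ℕ,
      Matrix.vecMul
        (Matrix.vecMul (fun s : Fin j => if (s : ℕ) = 0 then norm2 p₀ else 0)
          ((arnoldiHmat p₀ P j) ^ k))
        (arnoldiQmat p₀ P j) =
      Matrix.vecMul p₀ (P ^ k) :=
  arnoldi_exact_of_invariant_general hj P p₀ hp₀sum hrun hinv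
end

section
/- Any exact aggregation of (P, p_0) has dimension at least dim span{p_0^T, p_0^T P, p_0^T P^2, ...}. Hence, if K^j(p_0,P) is invariant under P (so this span has dimension j), the Arnoldi aggregation of size j is a smallest exact aggregation. -/
open Matrix

/-!
Exactness `Π A = A P` propagates to `Πᵏ A = A Pᵏ`, so with `p₀ = π₀ A` every iterate
`p₀ Pᵏ = (π₀ Πᵏ) A` lies in the row space of `A`, which has dimension at most `m`.
-/

namespace Matrix

variable {R : Type*} {l m : Type*} [Fintype l] [Fintype m] [DecidableEq l] [DecidableEq m]

theorem pow_mul_eq_mul_pow_of_mul_eq_mul [Semiring R] {Pm : Matrix m m R} {A : Matrix m l R}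
    {P : Matrix l l R} (h : Pm * A = A * P) (k : ℕ) : Pm ^ k * A = A * P ^ k := by
  induction k with
  | zero => simp
  | succ k ih =>
    rw [pow_succ, Matrix.mul_assoc, h, ← Matrix.mul_assoc, ih, Matrix.mul_assoc, pow_succ]

theorem vecMul_vecMul_pow_of_mul_eq_mul [CommSemiring R] {Pm : Matrix m m R}
    {A : Matrix m l R} {P : Matrix l l R} (h : Pm * A = A * P) (π₀ : m → R) (k : ℕ) :
    vecMul (vecMul π₀ A) (P ^ k) = vecMul (vecMul π₀ (Pm ^ k)) A := by
  rw [vecMul_vecMul, vecMul_vecMul, pow_mul_eq_mul_pow_of_mul_eq_mul h]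

theorem finrank_span_vecMul_pow_le_card [Field R] {Pm : Matrix m m R} {A : Matrix m l R}
    {P : Matrix l l R} (h : Pm * A = A * P) (π₀ : m → R) :
    Module.finrank R (Submodule.span R (Set.range fun k : ℕ => vecMul (vecMul π₀ A) (P ^ k)))
      ≤ Fintype.card m := by
  have hspan : Submodule.span R (Set.range fun k : ℕ => vecMul (vecMul π₀ A) (P ^ k))
      ≤ LinearMap.range (vecMulLinear A) := by
    rw [Submodule.span_le]
    rintro _ ⟨k, rfl⟩
    exact ⟨vecMul π₀ (Pm ^ k), (vecMul_vecMul_pow_of_mul_eq_mul h π₀ k).symm⟩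
  calc _ ≤ Module.finrank R (LinearMap.range (vecMulLinear A)) := Submodule.finrank_mono hspan
    _ ≤ Module.finrank R (m → R) := (vecMulLinear A).finrank_range_le
    _ = Fintype.card m := Module.finrank_fintype_fun_eq_card R

end Matrix

/-- any exact aggregation of `(P, p₀)` has dimension at least
`dim span{p₀, p₀P, p₀P², …}`. -/
theorem exact_min_size {n m : ℕ}
    (P : Matrix (Fin n) (Fin n) ℝ) (p₀ : Fin n → ℝ)
    (Pm : Matrix (Fin m) (Fin m) ℝ) (A : Matrix (Fin m) (Fin n) ℝ) (π₀ : Fin m → ℝ)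
    (hdyn : Pm * A = A * P) (hinit : Matrix.vecMul π₀ A = p₀) :
    Module.finrank ℝ
        (Submodule.span ℝ (Set.range fun k : ℕ => Matrix.vecMul p₀ (P ^ k))) ≤ m := by
  subst hinit
  simpa using finrank_span_vecMul_pow_le_card hdyn π₀
end

section
/- For any aggregation (Π, A, π_0) with p̃_0 = p_0, the transient error satisfies ‖p̃_k − p_k‖₁ ≤ Σ_{i=0}^{k−1} ⟨|π_i|, |Π A − A P|·𝟙_n⟩ for all k ≥ 1, where π_i^T = π_0^T Π^i, |·| denotes the entrywise absolute value, 𝟙_n is the all-ones vector, and P is row-stochastic. -/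
/-!
Writing `π_i = π₀ Πⁱ` and `E = ΠA − AP`, the error telescopes as
`p̃_k − p_k = π₀ (Πᵏ A − A Pᵏ) = Σ_{i<k} π_i E P^{k-1-i}`.
Each summand has ℓ¹-norm at most `Σ_s |π_i s| Σ_t |E s t|`, because multiplying a row vector
by the row-stochastic matrix `P^{k-1-i}` does not increase its ℓ¹-norm.
-/

open Matrix Finset

namespace Matrix

section Telescope

variable {R m n : Type*} [Ring R] [Fintype m] [DecidableEq m] [Fintype n] [DecidableEq n]

theorem pow_succ_mul_sub_mul_pow_succ_eq_sum (Q : Matrix m m R) (A : Matrix m n R)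
    (P : Matrix n n R) (k : ℕ) :
    Q ^ (k + 1) * A - A * P ^ (k + 1) =
      ∑ i ∈ range (k + 1), Q ^ i * (Q * A - A * P) * P ^ (k - i) := by
  induction k with
  | zero => simp
  | succ k ih =>
    have hshift : ∑ i ∈ range (k + 1), Q ^ i * (Q * A - A * P) * P ^ (k + 1 - i) =
        (∑ i ∈ range (k + 1), Q ^ i * (Q * A - A * P) * P ^ (k - i)) * P := by
      rw [Matrix.sum_mul]
      refine sum_congr rfl fun i hi => ?_
      rw [Nat.sub_add_comm (mem_range_succ_iff.mp hi), pow_succ, ← Matrix.mul_assoc]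
    rw [sum_range_succ, hshift, ← ih, Nat.sub_self, pow_zero, Matrix.mul_one]
    simp only [pow_succ, Matrix.sub_mul, Matrix.mul_sub, Matrix.mul_assoc]
    abel

end Telescope

section AbsSum

variable {R m n : Type*} [Ring R] [LinearOrder R] [IsStrictOrderedRing R]
  [Fintype m] [Fintype n]

theorem sum_abs_vecMul_le (v : m → R) (M : Matrix m n R) :
    ∑ j, |(v ᵥ* M) j| ≤ ∑ i, |v i| * ∑ j, |M i j| :=
  calc ∑ j, |(v ᵥ* M) j|
      ≤ ∑ j, ∑ i, |v i| * |M i j| :=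
        sum_le_sum fun j _ => (abs_sum_le_sum_abs _ _).trans_eq (by simp only [abs_mul])
    _ = ∑ i, |v i| * ∑ j, |M i j| := by
        rw [sum_comm]
        simp only [mul_sum]

theorem sum_abs_vecMul_le_of_mem_rowStochastic [DecidableEq n] {P : Matrix n n R}
    (hP : P ∈ rowStochastic R n) (v : n → R) :
    ∑ j, |(v ᵥ* P) j| ≤ ∑ i, |v i| := by
  refine (sum_abs_vecMul_le v P).trans_eq (sum_congr rfl fun i _ => ?_)
  simp only [abs_of_nonneg (nonneg_of_mem_rowStochastic hP), sum_row_of_mem_rowStochastic hP,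
    mul_one]

end AbsSum

end Matrix

/-- for any aggregation with `p̃_0 = p_0` and row-stochastic `P`,
`‖p̃_k − p_k‖₁ ≤ Σ_{i=0}^{k-1} ⟨|π_i|, |ΠA − AP|·𝟙⟩` for all `k ≥ 1`. -/
theorem aggregation_error_bound {m n : ℕ}
    (Pm : Matrix (Fin m) (Fin m) ℝ) (A : Matrix (Fin m) (Fin n) ℝ)
    (π₀ : Fin m → ℝ) (P : Matrix (Fin n) (Fin n) ℝ) (p₀ : Fin n → ℝ)
    (hPnn : ∀ i l, 0 ≤ P i l) (hProw : ∀ i, ∑ l, P i l = 1)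
    (hinit : Matrix.vecMul π₀ A = p₀) :
    ∀ k : ℕ, 1 ≤ k →
      ∑ s, |(Matrix.vecMul (Matrix.vecMul π₀ (Pm ^ k)) A - Matrix.vecMul p₀ (P ^ k)) s| ≤
        ∑ i ∈ Finset.range k, ∑ s : Fin m,
          |Matrix.vecMul π₀ (Pm ^ i) s| * ∑ t, |(Pm * A - A * P) s t| := by
  intro _ hk
  obtain ⟨k, rfl⟩ := Nat.exists_eq_add_of_le' hk
  have hP : P ∈ rowStochastic ℝ (Fin n) := mem_rowStochastic_iff_sum.mpr ⟨hPnn, hProw⟩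
  set E := Pm * A - A * P
  have htelescope : π₀ ᵥ* Pm ^ (k + 1) ᵥ* A - p₀ ᵥ* P ^ (k + 1) =
      ∑ i ∈ range (k + 1), π₀ ᵥ* Pm ^ i ᵥ* E ᵥ* P ^ (k - i) := by
    simp only [← hinit, vecMul_vecMul, ← vecMul_sub, pow_succ_mul_sub_mul_pow_succ_eq_sum,
      vecMul_sum]
    rfl
  calc ∑ s, |(π₀ ᵥ* Pm ^ (k + 1) ᵥ* A - p₀ ᵥ* P ^ (k + 1)) s|
      ≤ ∑ i ∈ range (k + 1), ∑ s, |(π₀ ᵥ* Pm ^ i ᵥ* E ᵥ* P ^ (k - i)) s| := by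
        rw [htelescope, sum_comm]
        refine sum_le_sum fun s _ => ?_
        rw [Finset.sum_apply]
        exact abs_sum_le_sum_abs _ _
    _ ≤ ∑ i ∈ range (k + 1), ∑ s, |(π₀ ᵥ* Pm ^ i ᵥ* E) s| :=
        sum_le_sum fun i _ => sum_abs_vecMul_le_of_mem_rowStochastic (pow_mem hP _) _
    _ ≤ ∑ i ∈ range (k + 1), ∑ s, |(π₀ ᵥ* Pm ^ i) s| * ∑ t, |E s t| :=
        sum_le_sum fun i _ => sum_abs_vecMul_le _ _
end
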